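/- Fix integers r ≥ 2, m ≥ 3, 1 ≤ t ≤ m−1 and a real number c > 0. Let γ be a 2-Frenet helix in the de Sitter space form S^m_t(c) with constant curvature κ > 0 and signs (ε₁,ε₂) ∈ {−1,1}². Then γ is proper r-harmonic (τ_r(γ) ≡ 0) if and only if κ² − ε₂(r−1)c = 0; and any such γ is automatically proper since ∇T = ε₂κN ≠ 0. -/

import Mathlib

open scoped BigOperators

noncomputable section

/-- The pseudo-Euclidean bilinear form of index `t` on `ℝⁿ` (modelled as `Fin n → ℝ`):
`⟪x,y⟫_t = −∑_{i<t} x_i y_i + ∑_{i≥t} x_i y_i`. -/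
def pform (t : ℕ) {n : ℕ} (x y : Fin n → ℝ) : ℝ :=
  ∑ i : Fin n, (if i.val < t then -(x i * y i) else x i * y i)

/-- The covariant derivative along `γ` induced on the quadric `⟪x,x⟫_t = 1/c`:
`∇X = X′ − c⟪X′,γ⟫_t γ`. -/
def cov (t : ℕ) {n : ℕ} (c : ℝ) (γ X : ℝ → Fin n → ℝ) : ℝ → Fin n → ℝ :=
  fun s => deriv X s - (c * pform t (deriv X s) (γ s)) • γ s

/-- The curvature operator of the space form: `R(X,Y)Z = c(⟪Y,Z⟫_t X − ⟪X,Z⟫_t Y)`. -/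
def curvOp (t : ℕ) {n : ℕ} (c : ℝ) (X Y Z : Fin n → ℝ) : Fin n → ℝ :=
  c • (pform t Y Z • X - pform t X Z • Y)

/-- The `r`-tension field of a curve `γ` in the space form:
`τ_r(γ) = ∇^{2r−1}T + ∑_{ℓ=0}^{r−2} (−1)^ℓ R(∇^{2r−3−ℓ}T, ∇^ℓT)T` with `T = γ′`. -/
def tensionField (t : ℕ) {n : ℕ} (c : ℝ) (r : ℕ) (γ : ℝ → Fin n → ℝ) (s : ℝ) : Fin n → ℝ :=
  (cov t c γ)^[2*r-1] (deriv γ) s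
    + ∑ ℓ ∈ Finset.range (r-1), ((-1 : ℝ)^ℓ) •
        curvOp t c ((cov t c γ)^[2*r-3-ℓ] (deriv γ) s) ((cov t c γ)^[ℓ] (deriv γ) s) (deriv γ s)

lemma pform_smul_left (t : ℕ) {n : ℕ} (u : ℝ) (x y : Fin n → ℝ) :
    pform t (u • x) y = u * pform t x y := by
  simp only [pform, Pi.smul_apply, smul_eq_mul, Finset.mul_sum]
  refine Finset.sum_congr rfl fun i _ => ?_
  split <;> ring

lemma pform_comm (t : ℕ) {n : ℕ} (x y : Fin n → ℝ) : pform t x y = pform t y x := by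
  refine Finset.sum_congr rfl fun i _ => ?_
  split <;> ring

lemma pform_zero (t : ℕ) {n : ℕ} (y : Fin n → ℝ) : pform t (0 : Fin n → ℝ) y = 0 := by
  simp [pform]

/-- `cov` only depends on the germ of the field at the point. -/
lemma cov_congr (t : ℕ) {n : ℕ} (c : ℝ) (γ X Y : ℝ → Fin n → ℝ) {s : ℝ}
    (h : X =ᶠ[nhds s] Y) : cov t c γ X s = cov t c γ Y s := by
  simp only [cov, h.deriv_eq]

lemma cov_const_smul (t : ℕ) {n : ℕ} (c u : ℝ) (γ X : ℝ → Fin n → ℝ) {s : ℝ}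
    (hX : DifferentiableAt ℝ X s) :
    cov t c γ (fun z => u • X z) s = u • cov t c γ X s := by
  have hd : deriv (fun z => u • X z) s = u • deriv X s := deriv_const_smul u hX
  simp only [cov, hd, pform_smul_left, smul_sub, smul_smul]
  ring_nf

/-- A `2`-Frenet helix in the de Sitter space form `S^m_t(c)` (`c > 0`, `m ≥ 3`)
is proper `r`-harmonic iff `κ² − ε₂(r−1)c = 0`; moreover it is automatically proper. -/
theorem stmt_2 (r m t : ℕ) (hr : 2 ≤ r) (hm : 3 ≤ m) (ht1 : 1 ≤ t) (ht2 : t ≤ m - 1)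
    (c : ℝ) (hc : 0 < c)
    (I : Set ℝ) (hIopen : IsOpen I) (hIne : I.Nonempty)
    (γ N : ℝ → Fin (m+1) → ℝ)
    (hγ : ContDiffOn ℝ (⊤ : ℕ∞) γ I) (hN : ContDiffOn ℝ (⊤ : ℕ∞) N I)
    (ε₁ ε₂ : ℝ) (hε₁ : ε₁ = 1 ∨ ε₁ = -1) (hε₂ : ε₂ = 1 ∨ ε₂ = -1)
    (κ : ℝ) (hκ : 0 < κ)
    (hquad : ∀ s ∈ I, pform t (γ s) (γ s) = 1 / c)
    (hunit : ∀ s ∈ I, pform t (deriv γ s) (deriv γ s) = ε₁)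
    (hNtan : ∀ s ∈ I, pform t (N s) (γ s) = 0)
    (hNN : ∀ s ∈ I, pform t (N s) (N s) = ε₂)
    (hTN : ∀ s ∈ I, pform t (deriv γ s) (N s) = 0)
    (hFr1 : ∀ s ∈ I, cov t c γ (deriv γ) s = (ε₂ * κ) • N s)
    (hFr2 : ∀ s ∈ I, cov t c γ N s = (-(ε₁ * κ)) • deriv γ s) :
    ((∀ s ∈ I, tensionField t c r γ s = 0) ↔ κ ^ 2 - ε₂ * ((r : ℝ) - 1) * c = 0) ∧
    (∀ s ∈ I, cov t c γ (deriv γ) s ≠ 0) := by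
  have hε₁0 : ε₁ ≠ 0 := by rcases hε₁ with h | h <;> simp [h]
  have hε₂0 : ε₂ ≠ 0 := by rcases hε₂ with h | h <;> simp [h]
  set a : ℝ := ε₂ * κ with ha
  set b : ℝ := -(ε₁ * κ) with hb
  set lam : ℝ := -(ε₁ * ε₂) * κ ^ 2 with hlam
  have hab : a * b = lam := by rw [ha, hb, hlam]; ring
  have ha0 : a ≠ 0 := mul_ne_zero hε₂0 hκ.ne'
  have hlam0 : lam ≠ 0 := by
    rw [hlam]
    exact mul_ne_zero (neg_ne_zero.2 (mul_ne_zero hε₁0 hε₂0)) (pow_ne_zero _ hκ.ne')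
  have hlin : lam + ((r:ℝ) - 1) * c * ε₁
      = -(ε₁ * ε₂) * (κ ^ 2 - ε₂ * ((r:ℝ) - 1) * c) := by
    rw [hlam]; rcases hε₂ with h | h <;> rw [h] <;> ring
  clear_value lam b a
  -- nonvanishing of N
  have hNne : ∀ s ∈ I, N s ≠ 0 := by
    intro s hs h0
    have := hNN s hs
    rw [h0, pform_zero] at this
    exact hε₂0 this.symm
  -- differentiability
  have hTdiff : ∀ s ∈ I, DifferentiableAt ℝ (deriv γ) s := by
    intro s hs
    have h1 : ContDiffOn ℝ 1 (deriv γ) I := hγ.deriv_of_isOpen hIopen (WithTop.coe_le_coe.2 le_top)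
    exact (h1.differentiableOn one_ne_zero).differentiableAt (hIopen.mem_nhds hs)
  have hNdiff : ∀ s ∈ I, DifferentiableAt ℝ N s :=
    fun s hs => (hN.differentiableOn (by simp)).differentiableAt (hIopen.mem_nhds hs)
  -- iterated covariant derivatives
  have hiter : ∀ j : ℕ,
      (∀ s ∈ I, (cov t c γ)^[2*j] (deriv γ) s = (lam ^ j) • deriv γ s) ∧
      (∀ s ∈ I, (cov t c γ)^[2*j+1] (deriv γ) s = (lam ^ j * a) • N s) := by
    intro j
    induction j with
    | zero =>
      constructor
      · intro s hs; simp
      · intro s hs; simpa using hFr1 s hs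
    | succ j ih =>
      obtain ⟨ihe, iho⟩ := ih
      have key_even : ∀ s ∈ I, (cov t c γ)^[2*(j+1)] (deriv γ) s
          = (lam ^ (j+1)) • deriv γ s := by
        intro s hs
        have h1 : 2*(j+1) = (2*j+1) + 1 := by ring
        rw [h1, Function.iterate_succ_apply']
        have hev : (cov t c γ)^[2*j+1] (deriv γ) =ᶠ[nhds s]
            (fun z => (lam ^ j * a) • N z) :=
          Filter.eventually_of_mem (hIopen.mem_nhds hs) (fun z hz => iho z hz)
        rw [cov_congr t c γ _ _ hev, cov_const_smul t c _ γ N (hNdiff s hs), hFr2 s hs,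
          smul_smul]
        congr 1
        rw [pow_succ, ← hab]
        ring
      constructor
      · exact key_even
      · intro s hs
        rw [Function.iterate_succ_apply']
        have hev : (cov t c γ)^[2*(j+1)] (deriv γ) =ᶠ[nhds s]
            (fun z => (lam ^ (j+1)) • deriv γ z) :=
          Filter.eventually_of_mem (hIopen.mem_nhds hs) (fun z hz => key_even z hz)
        rw [cov_congr t c γ _ _ hev, cov_const_smul t c _ γ (deriv γ) (hTdiff s hs),
          hFr1 s hs, smul_smul]
  -- the key coefficient
  set K : ℝ := lam ^ (r-1) * a + ((r:ℝ) - 1) * (c * ε₁ * lam ^ (r-2) * a) with hK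
  -- τ_r = K • N on I
  have htau : ∀ s ∈ I, tensionField t c r γ s = K • N s := by
    intro s hs
    have hmain : (cov t c γ)^[2*r-1] (deriv γ) s = (lam ^ (r-1) * a) • N s := by
      have h1 : 2*r - 1 = 2*(r-1) + 1 := by omega
      rw [h1]; exact (hiter (r-1)).2 s hs
    have hterm : ∀ ℓ ∈ Finset.range (r-1),
        ((-1 : ℝ)^ℓ) • curvOp t c ((cov t c γ)^[2*r-3-ℓ] (deriv γ) s)
          ((cov t c γ)^[ℓ] (deriv γ) s) (deriv γ s)
        = (c * ε₁ * lam ^ (r-2) * a) • N s := by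
      intro ℓ hℓ
      rw [Finset.mem_range] at hℓ
      have hpowsplit : (r-2-0) + 0 = r - 2 := by omega
      rcases Nat.even_or_odd ℓ with ⟨j, hj⟩ | ⟨j, hj⟩
      · -- ℓ = 2j even
        have hX : (cov t c γ)^[2*r-3-ℓ] (deriv γ) s = (lam ^ (r-2-j) * a) • N s := by
          have h1 : 2*r-3-ℓ = 2*(r-2-j) + 1 := by omega
          rw [h1]; exact (hiter (r-2-j)).2 s hs
        have hY : (cov t c γ)^[ℓ] (deriv γ) s = (lam ^ j) • deriv γ s := by
          have h1 : ℓ = 2*j := by omega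
          rw [h1]; exact (hiter j).1 s hs
        have hsign : ((-1 : ℝ)^ℓ) = 1 := Even.neg_one_pow ⟨j, hj⟩
        rw [hX, hY, hsign, one_smul, curvOp, pform_smul_left, pform_smul_left,
          hunit s hs, pform_comm t (N s), hTN s hs]
        simp only [mul_zero, zero_mul, zero_smul, sub_zero, smul_smul]
        have hpow : lam ^ (r-2-j) * lam ^ j = lam ^ (r-2) := by
          rw [← pow_add]; congr 1; omega
        congr 1
        linear_combination (c * ε₁ * a) * hpow
      · -- ℓ = 2j+1 odd
        have hX : (cov t c γ)^[2*r-3-ℓ] (deriv γ) s = (lam ^ (r-2-j)) • deriv γ s := by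
          have h1 : 2*r-3-ℓ = 2*(r-2-j) := by omega
          rw [h1]; exact (hiter (r-2-j)).1 s hs
        have hY : (cov t c γ)^[ℓ] (deriv γ) s = (lam ^ j * a) • N s := by
          have h1 : ℓ = 2*j + 1 := by omega
          rw [h1]; exact (hiter j).2 s hs
        have hsign : ((-1 : ℝ)^ℓ) = -1 := Odd.neg_one_pow ⟨j, by omega⟩
        rw [hX, hY, hsign, curvOp, pform_smul_left, pform_smul_left,
          pform_comm t (N s), hTN s hs, hunit s hs]
        simp only [mul_zero, zero_mul, zero_smul, zero_sub, smul_neg, neg_one_smul,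
          neg_neg, smul_smul, neg_smul]
        have hpow : lam ^ (r-2-j) * lam ^ j = lam ^ (r-2) := by
          rw [← pow_add]; congr 1; omega
        rw [← neg_smul]
        congr 1
        linear_combination (c * ε₁ * a) * hpow
    rw [tensionField, hmain, Finset.sum_congr rfl hterm, Finset.sum_const,
      Finset.card_range, ← Nat.cast_smul_eq_nsmul ℝ, smul_smul, ← add_smul]
    congr 1
    rw [hK, Nat.cast_sub (by omega : 1 ≤ r), Nat.cast_one]
    try ring
  -- relation between K and the condition
  have hKfact : K = (lam ^ (r-2) * a * (-(ε₁ * ε₂))) * (κ ^ 2 - ε₂ * ((r:ℝ) - 1) * c) := by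
    have h1 : lam ^ (r-1) = lam ^ (r-2) * lam := by
      rw [← pow_succ]; congr 1; omega
    rw [hK, h1]
    linear_combination (lam ^ (r-2) * a) * hlin
  refine ⟨⟨fun h => ?_, fun h s hs => ?_⟩, fun s hs => ?_⟩
  · -- forward
    obtain ⟨s₀, hs₀⟩ := hIne
    have h0 := h s₀ hs₀
    rw [htau s₀ hs₀] at h0
    have hK0 : K = 0 := by
      rcases smul_eq_zero.1 h0 with h' | h'
      · exact h'
      · exact absurd h' (hNne s₀ hs₀)
    rw [hKfact] at hK0
    have hne : lam ^ (r-2) * a * (-(ε₁ * ε₂)) ≠ 0 :=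
      mul_ne_zero (mul_ne_zero (pow_ne_zero _ hlam0) ha0)
        (neg_ne_zero.2 (mul_ne_zero hε₁0 hε₂0))
    exact (mul_eq_zero.1 hK0).resolve_left hne
  · -- backward
    rw [htau s hs, hKfact, h, mul_zero, zero_smul]
  · -- properness
    rw [hFr1 s hs]
    exact smul_ne_zero ha0 (hNne s hs)
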